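/- arXiv:1811.12294 — 9 statements merged into one kernel-verified Lean document; each statement's English description precedes it below -/
import Mathlib

section
/- Under the framework assumptions (Ax1)–(Ax5), every strict homomorphism h : (X, ξ, x₀) → (Y, ζ, y₀) of I-pointed TF-coalgebras (i.e. a lax homomorphism with TFh ∘ ξ = ζ ∘ h) is Path(I,F+1)-open: for every path morphism φ : (P,p) → (Q,q) and runs x : J(P,p) → (X,ξ,x₀) and y : J(Q,q) → (Y,ζ,y₀) with y ∘ Jφ = h ∘ x, there exists a run x' : J(Q,q) → (X,ξ,x₀) with x' ∘ Jφ = x and h ∘ x' = y. -/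
open CategoryTheory CategoryTheory.Limits

universe v u

variable {C : Type u} [Category.{v} C]

/-- A morphism `s : S ⟶ G.obj R` is `G`-precise. -/
def Precise (G : C ⥤ C) {S R : C} (s : S ⟶ G.obj R) : Prop :=
  ∀ {A D : C} (f : S ⟶ G.obj A) (g : R ⟶ D) (h : A ⟶ D),
    f ≫ G.map h = s ≫ G.map g → ∃ d : R ⟶ A, s ≫ G.map d = f ∧ d ≫ h = g

/-- `G` admits precise factorizations w.r.t. a class `S` of objects. -/
def AdmitsPreciseFact (G : C ⥤ C) (S : Set C) : Prop :=
  ∀ {X Y : C} (f : X ⟶ G.obj Y), X ∈ S →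
    ∃ (Y' : C) (h : Y' ⟶ Y) (f' : X ⟶ G.obj Y'),
      Y' ∈ S ∧ Precise G f' ∧ f' ≫ G.map h = f

variable [HasFiniteCoproducts C] [HasTerminal C]

/-- The functor `F + 1 : X ↦ F X + 1`. -/
noncomputable def Fp1 (F : C ⥤ C) : C ⥤ C where
  obj X := F.obj X ⨿ ⊤_ C
  map f := coprod.map (F.map f) (𝟙 _)

/-- A functorial partial order on the hom-sets `C(X, T Y)`. -/
structure HomOrder (T : C ⥤ C) where
  le : ∀ {X Y : C}, (X ⟶ T.obj Y) → (X ⟶ T.obj Y) → Prop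
  le_refl : ∀ {X Y : C} (f : X ⟶ T.obj Y), le f f
  le_trans : ∀ {X Y : C} {f g h : X ⟶ T.obj Y}, le f g → le g h → le f h
  le_antisymm : ∀ {X Y : C} {f g : X ⟶ T.obj Y}, le f g → le g f → f = g
  le_comp : ∀ {X' X Y Y' : C} (g : X' ⟶ X) (h : Y ⟶ Y') {f₁ f₂ : X ⟶ T.obj Y},
    le f₁ f₂ → le (g ≫ f₁ ≫ T.map h) (g ≫ f₂ ≫ T.map h)

/-- The copairing `[η_Y, ⊥_Y] : Y + 1 ⟶ T Y`. -/
noncomputable def cop (T : C ⥤ C) (η : 𝟭 C ⟶ T)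
    (bot : (Functor.const C).obj (⊤_ C) ⟶ T) (Y : C) : (Y ⨿ ⊤_ C) ⟶ T.obj Y :=
  coprod.desc (η.app Y) (bot.app Y)

/-- An `I`-pointed `TF`-coalgebra. -/
structure Coalg (T F : C ⥤ C) (I : C) where
  X : C
  str : X ⟶ T.obj (F.obj X)
  pt : I ⟶ X

/-- A lax homomorphism of `I`-pointed `TF`-coalgebras. -/
def IsLaxHom {T F : C ⥤ C} {I : C} (ord : HomOrder T) (A B : Coalg T F I)
    (f : A.X ⟶ B.X) : Prop :=
  A.pt ≫ f = B.pt ∧ ord.le (A.str ≫ T.map (F.map f)) (f ≫ B.str)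

/-- A path of length `n`: a chain of `(F+1)`-precise morphisms starting at `I`. -/
structure FPath1 (F : C ⥤ C) (I : C) (n : ℕ) where
  P : ℕ → C
  hP0 : P 0 = I
  p : ∀ k, k < n → (P k ⟶ (Fp1 F).obj (P (k + 1)))
  precise : ∀ k (h : k < n), Precise (Fp1 F) (p k h)

/-- A path morphism between paths of lengths `n ≤ m`. -/
structure FPath1Mor {F : C ⥤ C} {I : C} {n m : ℕ} (Pp : FPath1 F I n)
    (Qq : FPath1 F I m) (hnm : n ≤ m) where
  φ : ∀ k, k ≤ n → (Pp.P k ⟶ Qq.P k)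
  φ0 : φ 0 (Nat.zero_le n) = eqToHom (Pp.hP0.trans Qq.hP0.symm)
  comm : ∀ k (h : k < n),
    φ k h.le ≫ Qq.p k (lt_of_lt_of_le h hnm) =
      Pp.p k h ≫ (Fp1 F).map (φ (k + 1) h)

/-- The functor `J`, on objects: the `I`-pointed `TF`-coalgebra induced by a path. -/
noncomputable def Jobj (T F : C ⥤ C) (η : 𝟭 C ⟶ T)
    (bot : (Functor.const C).obj (⊤_ C) ⟶ T) {I : C} {n : ℕ}
    (Pp : FPath1 F I n) : Coalg T F I where
  X := ∐ fun k : Fin (n + 1) => Pp.P k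
  str := Sigma.desc fun k =>
    if h : (k : ℕ) < n then
      Pp.p k h ≫
        coprod.map (F.map (Sigma.ι (fun j : Fin (n + 1) => Pp.P j) ⟨(k : ℕ) + 1, by omega⟩))
          (𝟙 _) ≫
        cop T η bot _
    else
      terminal.from _ ≫ bot.app _
  pt := eqToHom Pp.hP0.symm ≫ Sigma.ι (fun j : Fin (n + 1) => Pp.P j) ⟨0, by omega⟩

/-- The functor `J`, on morphisms. -/
noncomputable def Jmor (T F : C ⥤ C) (η : 𝟭 C ⟶ T)
    (bot : (Functor.const C).obj (⊤_ C) ⟶ T) {I : C} {n m : ℕ}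
    {Pp : FPath1 F I n} {Qq : FPath1 F I m} {hnm : n ≤ m}
    (φ : FPath1Mor Pp Qq hnm) :
    (Jobj T F η bot Pp).X ⟶ (Jobj T F η bot Qq).X :=
  Sigma.desc fun k : Fin (n + 1) =>
    φ.φ k (by omega) ≫ Sigma.ι (fun j : Fin (m + 1) => Qq.P j) ⟨(k : ℕ), by omega⟩

/-- `h` is `Path(I,F+1)`-open. -/
def IsPathOpen {T F : C ⥤ C} {I : C} (η : 𝟭 C ⟶ T)
    (bot : (Functor.const C).obj (⊤_ C) ⟶ T) (ord : HomOrder T)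
    {A B : Coalg T F I} (h : A.X ⟶ B.X) : Prop :=
  ∀ {n m : ℕ} (hnm : n ≤ m) (Pp : FPath1 F I n) (Qq : FPath1 F I m)
    (φ : FPath1Mor Pp Qq hnm)
    (x : (Jobj T F η bot Pp).X ⟶ A.X) (y : (Jobj T F η bot Qq).X ⟶ B.X),
    IsLaxHom ord (Jobj T F η bot Pp) A x →
    IsLaxHom ord (Jobj T F η bot Qq) B y →
    Jmor T F η bot φ ≫ y = x ≫ h →
    ∃ x' : (Jobj T F η bot Qq).X ⟶ A.X,
      IsLaxHom ord (Jobj T F η bot Qq) A x' ∧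
      Jmor T F η bot φ ≫ x' = x ∧ x' ≫ h = y

/-- least upper bound w.r.t. a hom-order. -/
def IsLUBhom {T : C ⥤ C} (ord : HomOrder T) {X Y : C}
    (s : Set (X ⟶ T.obj Y)) (f : X ⟶ T.obj Y) : Prop :=
  (∀ g ∈ s, ord.le g f) ∧ ∀ u, (∀ g ∈ s, ord.le g u) → ord.le f u

/-- Path-reachability: the family of all runs of paths is jointly epic. -/
def PathReachable {T F : C ⥤ C} {I : C} (η : 𝟭 C ⟶ T)
    (bot : (Functor.const C).obj (⊤_ C) ⟶ T) (ord : HomOrder T)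
    (A : Coalg T F I) : Prop :=
  ∀ {W : C} (u v : A.X ⟶ W),
    (∀ (n : ℕ) (Pp : FPath1 F I n) (r : (Jobj T F η bot Pp).X ⟶ A.X),
      IsLaxHom ord (Jobj T F η bot Pp) A r → r ≫ u = r ≫ v) → u = v

section Theorems

variable [HasPullbacks C]

@[simp] lemma Fp1_obj' (F : C ⥤ C) (X : C) : (Fp1 F).obj X = (F.obj X ⨿ ⊤_ C) := rfl

@[simp] lemma Fp1_map' (F : C ⥤ C) {X Y : C} (f : X ⟶ Y) :
    (Fp1 F).map f = coprod.map (F.map f) (𝟙 (⊤_ C)) := rfl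

lemma cop_natural (T : C ⥤ C) (η : 𝟭 C ⟶ T) (bot : (Functor.const C).obj (⊤_ C) ⟶ T)
    {Y Z : C} (w : Y ⟶ Z) :
    cop T η bot Y ≫ T.map w = coprod.map w (𝟙 (⊤_ C)) ≫ cop T η bot Z := by
  apply coprod.hom_ext
  · simp only [cop, coprod.inl_desc_assoc, coprod.inl_map_assoc]; erw [coprod.inl_desc]; exact (η.naturality w).symm
  · simp only [cop, coprod.inr_desc_assoc, coprod.inr_map_assoc]; erw [coprod.inr_desc]; simpa using (bot.naturality w).symm

lemma bot_natural (T : C ⥤ C) (bot : (Functor.const C).obj (⊤_ C) ⟶ T)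
    {Y Z : C} (w : Y ⟶ Z) : bot.app Y ≫ T.map w = bot.app Z := by
  simpa using (bot.naturality w).symm

lemma mem_of_precise {G : C ⥤ C} {S : Set C}
    (hiso : ∀ {X Y : C}, X ∈ S → (X ≅ Y) → Y ∈ S)
    (ax1 : AdmitsPreciseFact G S) {X R : C} (s : X ⟶ G.obj R)
    (hs : Precise G s) (hX : X ∈ S) : R ∈ S := by
  obtain ⟨Y', h₀, f', hY', hf', hfac⟩ := ax1 s hX
  obtain ⟨d, hd1, hd2⟩ := hs f' (𝟙 R) h₀ (by simpa using hfac)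
  obtain ⟨e, he1, he2⟩ := hf' s (𝟙 Y') d (by simpa using hd1)
  obtain ⟨u, hu1, hu2⟩ := hs s (𝟙 R) (d ≫ e)
    (by rw [G.map_comp, ← Category.assoc, hd1, he1]; simp)
  have hidem : (d ≫ e) ≫ d ≫ e = d ≫ e := by
    rw [Category.assoc, ← Category.assoc e d, he2, Category.id_comp]
  have hde : d ≫ e = 𝟙 R := by
    calc d ≫ e = (u ≫ (d ≫ e)) ≫ d ≫ e := by rw [hu2, Category.id_comp]
    _ = u ≫ ((d ≫ e) ≫ d ≫ e) := by rw [Category.assoc]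
    _ = u ≫ (d ≫ e) := by rw [hidem]
    _ = 𝟙 R := hu2
  exact hiso hY' ⟨e, d, he2, hde⟩

lemma Jobj_ι_str_lt (T F : C ⥤ C) (η : 𝟭 C ⟶ T)
    (bot : (Functor.const C).obj (⊤_ C) ⟶ T) {I : C} {n : ℕ}
    (Pp : FPath1 F I n) (k : Fin (n + 1)) (hk : (k : ℕ) < n) :
    Sigma.ι (fun j : Fin (n + 1) => Pp.P j) k ≫ (Jobj T F η bot Pp).str =
      Pp.p k hk ≫
        coprod.map (F.map (Sigma.ι (fun j : Fin (n + 1) => Pp.P j) ⟨(k : ℕ) + 1, by omega⟩))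
          (𝟙 (⊤_ C)) ≫ cop T η bot (F.obj ((Jobj T F η bot Pp).X)) := by
  show Sigma.ι _ _ ≫ Sigma.desc _ = _
  erw [Sigma.ι_desc]
  exact dif_pos hk

lemma Jobj_ι_str_last (T F : C ⥤ C) (η : 𝟭 C ⟶ T)
    (bot : (Functor.const C).obj (⊤_ C) ⟶ T) {I : C} {n : ℕ}
    (Pp : FPath1 F I n) (k : Fin (n + 1)) (hk : ¬ (k : ℕ) < n) :
    Sigma.ι (fun j : Fin (n + 1) => Pp.P j) k ≫ (Jobj T F η bot Pp).str =
      terminal.from _ ≫ bot.app (F.obj ((Jobj T F η bot Pp).X)) := by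
  show Sigma.ι _ _ ≫ Sigma.desc _ = _
  erw [Sigma.ι_desc]
  exact dif_neg hk

lemma Jmor_ι (T F : C ⥤ C) (η : 𝟭 C ⟶ T)
    (bot : (Functor.const C).obj (⊤_ C) ⟶ T) {I : C} {n m : ℕ}
    {Pp : FPath1 F I n} {Qq : FPath1 F I m} {hnm : n ≤ m}
    (φ : FPath1Mor Pp Qq hnm) (k : Fin (n + 1)) (hk : (k : ℕ) ≤ n) :
    Sigma.ι (fun j : Fin (n + 1) => Pp.P j) k ≫ Jmor T F η bot φ =
      φ.φ k hk ≫ Sigma.ι (fun j : Fin (m + 1) => Qq.P j) ⟨(k : ℕ), by omega⟩ := by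
  show Sigma.ι _ _ ≫ Sigma.desc _ = _
  rw [Sigma.ι_desc]
  rfl

lemma run_component (T F : C ⥤ C) (η : 𝟭 C ⟶ T)
    (bot : (Functor.const C).obj (⊤_ C) ⟶ T) (ord : HomOrder T)
    {I : C} {N : ℕ} (Rr : FPath1 F I N) (D : Coalg T F I)
    (r : (Jobj T F η bot Rr).X ⟶ D.X)
    (hr : ord.le ((Jobj T F η bot Rr).str ≫ T.map (F.map r)) (r ≫ D.str))
    (k : ℕ) (hk : k < N) :
    ord.le (Rr.p k hk ≫
        (Fp1 F).map (Sigma.ι (fun l : Fin (N+1) => Rr.P l) ⟨k+1, by omega⟩ ≫ r) ≫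
        cop T η bot (F.obj D.X))
      ((Sigma.ι (fun l : Fin (N+1) => Rr.P l) ⟨k, by omega⟩ ≫ r) ≫ D.str) := by
  have h0 := ord.le_comp (Sigma.ι (fun l : Fin (N+1) => Rr.P l) ⟨k, by omega⟩)
    (𝟙 (F.obj D.X)) hr
  erw [CategoryTheory.Functor.map_id, Category.comp_id, Category.comp_id, ← Category.assoc,
    Jobj_ι_str_lt T F η bot Rr ⟨k, by omega⟩ hk, Category.assoc, Category.assoc,
    cop_natural, ← Category.assoc (coprod.map _ _), coprod.map_map, Category.comp_id,
    ← CategoryTheory.Functor.map_comp, ← Fp1_map'] at h0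
  erw [Category.assoc]
  exact h0

set_option maxHeartbeats 1600000 in

theorem hom_is_open
    (T F : C ⥤ C) (I : C) (S : Set C)
    (hiso : ∀ {X Y : C}, X ∈ S → (X ≅ Y) → Y ∈ S) (hI : I ∈ S)
    (η : 𝟭 C ⟶ T) (bot : (Functor.const C).obj (⊤_ C) ⟶ T)
    (ord : HomOrder T)
    (ax1 : AdmitsPreciseFact (Fp1 F) S)
    (ax2 : ∀ (ι : Type v) {Y Z : C} (Xf : ι → C) (e : ∀ i, Xf i ⟶ Y),
      (∀ {W : C} (u v : Y ⟶ W), (∀ i, e i ≫ u = e i ≫ v) → u = v) →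
      ∀ (f g : Y ⟶ T.obj Z), (∀ i, ord.le (e i ≫ f) (e i ≫ g)) → ord.le f g)
    (ax3 : ∀ {X Y : C} (f : X ⟶ T.obj Y), ord.le (terminal.from X ≫ bot.app Y) f)
    (ax4 : ∀ {X Y : C} (f : X ⟶ T.obj Y), X ∈ S →
      IsLUBhom ord {g | ∃ f' : X ⟶ Y ⨿ ⊤_ C, g = f' ≫ cop T η bot Y ∧ ord.le g f} f)
    (ax5 : ∀ {A X Y : C}, A ∈ S → ∀ (x : A ⟶ T.obj X) (y : A ⟶ Y ⨿ ⊤_ C) (h : X ⟶ Y),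
      ord.le (y ≫ cop T η bot Y) (x ≫ T.map h) →
      ∃ x' : A ⟶ X ⨿ ⊤_ C, ord.le (x' ≫ cop T η bot X) x ∧
        x' ≫ coprod.map h (𝟙 (⊤_ C)) = y)
    (A B : Coalg T F I) (h : A.X ⟶ B.X)
    (hpt : A.pt ≫ h = B.pt)
    (hstrict : A.str ≫ T.map (F.map h) = h ≫ B.str) :
    IsPathOpen η bot ord h := by
  intro n m hnm Pp Qq φ x y hx hy hsq
  -- all objects of the path Qq lie in S
  have hQS : ∀ i, i ≤ m → Qq.P i ∈ S := by
    intro i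
    induction i with
    | zero => intro _; exact hiso hI (eqToIso Qq.hP0.symm)
    | succ k ih =>
      intro hk
      exact mem_of_precise hiso ax1 (Qq.p k (by omega)) (Qq.precise k (by omega)) (ih (by omega))
  -- the components of φ are isomorphisms
  have hsig : ∀ i (hi : i ≤ n), ∃ σq : Qq.P i ⟶ Pp.P i,
      φ.φ i hi ≫ σq = 𝟙 _ ∧ σq ≫ φ.φ i hi = 𝟙 _ := by
    intro i
    induction i with
    | zero =>
      intro hi
      refine ⟨eqToHom (Qq.hP0.trans Pp.hP0.symm), ?_, ?_⟩ <;>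
        rw [show φ.φ 0 hi = eqToHom (Pp.hP0.trans Qq.hP0.symm) from φ.φ0] <;> simp
    | succ k ih =>
      intro hi
      obtain ⟨σk, h1, h2⟩ := ih (by omega)
      have hkn : k < n := hi
      have hkm : k < m := by omega
      obtain ⟨ρ, hρ1, hρ2⟩ := Qq.precise k hkm (σk ≫ Pp.p k hkn) (𝟙 _) (φ.φ (k+1) hi)
        (by rw [CategoryTheory.Functor.map_id, Category.comp_id, Category.assoc, ← φ.comm k hkn,
          ← Category.assoc, h2, Category.id_comp])
      obtain ⟨u, hu1, hu2⟩ := Pp.precise k hkn (Pp.p k hkn) (𝟙 _) (φ.φ (k+1) hi ≫ ρ)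
        (by rw [CategoryTheory.Functor.map_id, Category.comp_id, CategoryTheory.Functor.map_comp, ← Category.assoc,
          ← φ.comm k hkn, Category.assoc, hρ1, ← Category.assoc, h1, Category.id_comp])
      have hid : (φ.φ (k+1) hi ≫ ρ) ≫ φ.φ (k+1) hi ≫ ρ = φ.φ (k+1) hi ≫ ρ := by
        rw [Category.assoc, ← Category.assoc ρ (φ.φ (k+1) hi) ρ, hρ2, Category.id_comp]
      have hφρ : φ.φ (k+1) hi ≫ ρ = 𝟙 _ := by
        calc φ.φ (k+1) hi ≫ ρ
            = (u ≫ (φ.φ (k+1) hi ≫ ρ)) ≫ φ.φ (k+1) hi ≫ ρ := by rw [hu2, Category.id_comp]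
          _ = u ≫ ((φ.φ (k+1) hi ≫ ρ) ≫ φ.φ (k+1) hi ≫ ρ) := by rw [Category.assoc]
          _ = u ≫ (φ.φ (k+1) hi ≫ ρ) := by rw [hid]
          _ = 𝟙 _ := hu2
      exact ⟨ρ, hφρ, hρ2⟩
  choose σq hσ1 hσ2 using hsig
  -- compatibility of σq with the path structures
  have hσp : ∀ k (hk : k + 1 ≤ n),
      σq k (by omega) ≫ Pp.p k hk = Qq.p k (by omega) ≫ (Fp1 F).map (σq (k+1) hk) := by
    intro k hk
    calc σq k (by omega) ≫ Pp.p k hk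
        = σq k (by omega) ≫ (Pp.p k hk ≫ (Fp1 F).map (φ.φ (k+1) hk)) ≫
            (Fp1 F).map (σq (k+1) hk) := by
          rw [Category.assoc, ← CategoryTheory.Functor.map_comp, hσ1 (k+1) hk, CategoryTheory.Functor.map_id,
            Category.comp_id]
      _ = (σq k (by omega) ≫ φ.φ k (by omega)) ≫ Qq.p k (by omega) ≫
            (Fp1 F).map (σq (k+1) hk) := by
          rw [← φ.comm k hk]; simp only [Category.assoc]
      _ = Qq.p k (by omega) ≫ (Fp1 F).map (σq (k+1) hk) := by
          rw [hσ2, Category.id_comp]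
  -- componentwise version of the square hsq
  have hxy : ∀ i (hi : i ≤ n),
      (Sigma.ι (fun l : Fin (n+1) => Pp.P l) ⟨i, by omega⟩ ≫ x) ≫ h =
        φ.φ i hi ≫ (Sigma.ι (fun l : Fin (m+1) => Qq.P l) ⟨i, by omega⟩ ≫ y) := by
    intro i hi
    have h0 : (Sigma.ι (fun l : Fin (n+1) => Pp.P l) ⟨i, by omega⟩ ≫ Jmor T F η bot φ) ≫ y =
        Sigma.ι (fun l : Fin (n+1) => Pp.P l) ⟨i, by omega⟩ ≫ x ≫ h := by
      erw [Category.assoc, hsq]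
      rfl
    erw [Jmor_ι T F η bot φ ⟨i, by omega⟩ hi, Category.assoc] at h0
    erw [Category.assoc]
    exact h0.symm
  -- σq-twisted version
  have hA : ∀ i (hi : i ≤ n),
      (σq i hi ≫ (Sigma.ι (fun l : Fin (n+1) => Pp.P l) ⟨i, by omega⟩ ≫ x)) ≫ h =
        Sigma.ι (fun l : Fin (m+1) => Qq.P l) ⟨i, by omega⟩ ≫ y := by
    intro i hi
    rw [Category.assoc, hxy i hi, ← Category.assoc, hσ2 i hi, Category.id_comp]
  -- componentwise run conditions
  have hyrun := run_component T F η bot ord Qq B y hy.2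
  have hxrun := run_component T F η bot ord Pp A x hx.2
  -- the inductive construction of the components of the diagonal
  have chain : ∀ j, ∀ _ : j ≤ m, ∃ w : ∀ i, i ≤ j → (Qq.P i ⟶ A.X),
      (∀ i (hij : i ≤ j) (hin : i ≤ n),
        w i hij = σq i hin ≫ (Sigma.ι (fun l : Fin (n+1) => Pp.P l) ⟨i, by omega⟩ ≫ x)) ∧
      (∀ i (hij : i ≤ j),
        w i hij ≫ h = Sigma.ι (fun l : Fin (m+1) => Qq.P l) ⟨i, by omega⟩ ≫ y) ∧
      (∀ i (hij : i + 1 ≤ j),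
        ord.le (Qq.p i (by omega) ≫ (Fp1 F).map (w (i+1) hij) ≫ cop T η bot (F.obj A.X))
          (w i (by omega) ≫ A.str)) := by
    intro j
    induction j with
    | zero =>
      intro _
      refine ⟨fun i hij => (by omega : (0:ℕ) = i) ▸
        (σq 0 (Nat.zero_le n) ≫ (Sigma.ι (fun l : Fin (n+1) => Pp.P l) ⟨0, by omega⟩ ≫ x)),
        ?_, ?_, ?_⟩
      · intro i hij hin
        obtain rfl : i = 0 := by omega
        rfl
      · intro i hij
        obtain rfl : i = 0 := by omega
        exact hA 0 (Nat.zero_le n)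
      · intro i hij; omega
    | succ j ih =>
      intro hj1
      obtain ⟨w, hw1, hw2, hw3⟩ := ih (by omega)
      by_cases hn : j + 1 ≤ n
      · -- new level still inside the range of φ
        refine ⟨fun i hij => if h' : i ≤ j then w i h' else (by omega : (j+1:ℕ) = i) ▸
          (σq (j+1) hn ≫ (Sigma.ι (fun l : Fin (n+1) => Pp.P l) ⟨j+1, by omega⟩ ≫ x)),
          ?_, ?_, ?_⟩
        · intro i hij hin
          by_cases h' : i ≤ j
          · simp only [dif_pos h']; exact hw1 i h' hin
          · simp only [dif_neg h']
            obtain rfl : i = j + 1 := by omega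
            rfl
        · intro i hij
          by_cases h' : i ≤ j
          · simp only [dif_pos h']; exact hw2 i h'
          · simp only [dif_neg h']
            obtain rfl : i = j + 1 := by omega
            exact hA (j+1) hn
        · intro i hij
          by_cases h' : i + 1 ≤ j
          · simp only [dif_pos h', dif_pos (show i ≤ j by omega)]
            exact hw3 i h'
          · obtain rfl : j = i := by omega
            simp only [dif_neg h', dif_pos (le_refl j)]
            -- step inside the range of φ : use the run condition of x transported by σq
            have hjn : j < n := hn
            have h0 := ord.le_comp (σq j (by omega)) (𝟙 (F.obj A.X)) (hxrun j hjn)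
            rw [CategoryTheory.Functor.map_id, Category.comp_id, Category.comp_id] at h0
            have e1 : Qq.p j (by omega) ≫ (Fp1 F).map ((by omega : (j+1:ℕ) = j+1) ▸
                  (σq (j+1) hn ≫ (Sigma.ι (fun l : Fin (n+1) => Pp.P l) ⟨j+1, by omega⟩ ≫ x))) ≫
                  cop T η bot (F.obj A.X) =
                σq j (by omega) ≫ Pp.p j hjn ≫
                  (Fp1 F).map (Sigma.ι (fun l : Fin (n+1) => Pp.P l) ⟨j+1, by omega⟩ ≫ x) ≫
                  cop T η bot (F.obj A.X) := by
              erw [show ((by omega : (j+1:ℕ) = j+1) ▸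
                  (σq (j+1) hn ≫ (Sigma.ι (fun l : Fin (n+1) => Pp.P l) ⟨j+1, by omega⟩ ≫ x)) :
                    Qq.P (j+1) ⟶ A.X) =
                  σq (j+1) hn ≫ (Sigma.ι (fun l : Fin (n+1) => Pp.P l) ⟨j+1, by omega⟩ ≫ x)
                  from rfl,
                CategoryTheory.Functor.map_comp, ← Category.assoc, ← Category.assoc,
                ← hσp j hn, Category.assoc, Category.assoc]
            rw [e1, hw1 j (by omega) (by omega), Category.assoc]
            exact h0
      · -- new level beyond the range of φ : use ax5 and preciseness
        have hjm : j < m := by omega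
        have hwj2 := hw2 j (le_refl j)
        have hle : ord.le ((Qq.p j hjm ≫
              (Fp1 F).map (Sigma.ι (fun l : Fin (m+1) => Qq.P l) ⟨j+1, by omega⟩ ≫ y)) ≫
              cop T η bot (F.obj B.X))
            ((w j (le_refl j) ≫ A.str) ≫ T.map (F.map h)) := by
          have e2 : (w j (le_refl j) ≫ A.str) ≫ T.map (F.map h) =
              (Sigma.ι (fun l : Fin (m+1) => Qq.P l) ⟨j, by omega⟩ ≫ y) ≫ B.str := by
            rw [Category.assoc, hstrict, ← Category.assoc, hwj2]
          erw [e2, Category.assoc]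
          exact hyrun j hjm
        obtain ⟨f, hf1, hf2⟩ := ax5 (hQS j (by omega)) (w j (le_refl j) ≫ A.str)
          (Qq.p j hjm ≫ (Fp1 F).map (Sigma.ι (fun l : Fin (m+1) => Qq.P l) ⟨j+1, by omega⟩ ≫ y))
          (F.map h) hle
        obtain ⟨d, hd1, hd2⟩ := Qq.precise j hjm f
          (Sigma.ι (fun l : Fin (m+1) => Qq.P l) ⟨j+1, by omega⟩ ≫ y) h
          (by rw [Fp1_map']; exact hf2)
        refine ⟨fun i hij => if h' : i ≤ j then w i h' else (by omega : (j+1:ℕ) = i) ▸ d,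
          ?_, ?_, ?_⟩
        · intro i hij hin
          by_cases h' : i ≤ j
          · simp only [dif_pos h']; exact hw1 i h' hin
          · omega
        · intro i hij
          by_cases h' : i ≤ j
          · simp only [dif_pos h']; exact hw2 i h'
          · simp only [dif_neg h']
            obtain rfl : i = j + 1 := by omega
            exact hd2
        · intro i hij
          by_cases h' : i + 1 ≤ j
          · simp only [dif_pos h', dif_pos (show i ≤ j by omega)]
            exact hw3 i h'
          · obtain rfl : j = i := by omega
            simp only [dif_neg h', dif_pos (le_refl j)]
            have e3 : Qq.p j (by omega) ≫ (Fp1 F).map ((by omega : (j+1:ℕ) = j+1) ▸ d) ≫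
                cop T η bot (F.obj A.X) = f ≫ cop T η bot (F.obj A.X) := by
              erw [show ((by omega : (j+1:ℕ) = j+1) ▸ d : Qq.P (j+1) ⟶ A.X) = d from rfl,
                ← Category.assoc, hd1]
              rfl
            rw [e3]
            exact hf1
  obtain ⟨w, hw1, hw2, hw3⟩ := chain m (le_refl m)
  refine ⟨Sigma.desc (fun k : Fin (m+1) => w (k : ℕ) (Nat.lt_succ_iff.mp k.isLt)),
    ⟨?_, ?_⟩, ?_, ?_⟩
  · -- pointing
    have e0 : (Jobj T F η bot Qq).pt =
        eqToHom Qq.hP0.symm ≫ Sigma.ι (fun l : Fin (m+1) => Qq.P l) ⟨0, by omega⟩ := rfl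
    erw [e0, Category.assoc, Sigma.ι_desc, hw1 0 (by omega) (Nat.zero_le n)]
    have h00 : (eqToHom Qq.hP0.symm : I ⟶ Qq.P 0) =
        eqToHom Pp.hP0.symm ≫ φ.φ 0 (Nat.zero_le n) := by
      rw [φ.φ0, eqToHom_trans]
    erw [h00, Category.assoc, ← Category.assoc (φ.φ 0 (Nat.zero_le n)),
      hσ1 0 (Nat.zero_le n), Category.id_comp, ← Category.assoc]
    exact hx.1
  · -- lax homomorphism inequality
    apply ax2 (ULift.{v} (Fin (m+1))) (fun k => Qq.P k.down)
      (fun k => Sigma.ι (fun l : Fin (m+1) => Qq.P l) k.down)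
      (fun u v huv => Sigma.hom_ext u v (fun b => huv ⟨b⟩))
    intro k'
    obtain ⟨k⟩ := k'
    by_cases hk : (k : ℕ) < m
    · erw [← Category.assoc, ← Category.assoc, Jobj_ι_str_lt T F η bot Qq k hk, Sigma.ι_desc,
        Category.assoc, Category.assoc, cop_natural, ← Category.assoc (coprod.map _ _),
        coprod.map_map, Category.comp_id, ← CategoryTheory.Functor.map_comp, Sigma.ι_desc,
        ← Fp1_map']
      exact hw3 (k : ℕ) hk
    · erw [← Category.assoc, Jobj_ι_str_last T F η bot Qq k hk, Category.assoc, bot_natural]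
      exact ax3 _
  · -- upper triangle
    apply Sigma.hom_ext
    intro k
    erw [← Category.assoc, Jmor_ι T F η bot φ k (Nat.lt_succ_iff.mp k.isLt), Category.assoc,
      Sigma.ι_desc,
      hw1 (k : ℕ) (le_trans (Nat.lt_succ_iff.mp k.isLt) hnm) (Nat.lt_succ_iff.mp k.isLt),
      ← Category.assoc, hσ1 (k : ℕ) (Nat.lt_succ_iff.mp k.isLt), Category.id_comp]
  · -- lower triangle
    apply Sigma.hom_ext
    intro k
    erw [← Category.assoc, Sigma.ι_desc]
    exact hw2 (k : ℕ) (Nat.lt_succ_iff.mp k.isLt)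

end Theorems
end

section
/- Under the framework assumptions (Ax1)–(Ax5), and assuming additionally that C is balanced (every morphism that is both a monomorphism and an epimorphism is an isomorphism), every path-reachable I-pointed TF-coalgebra (X, ξ, x₀) has no proper subcoalgebra: every strict coalgebra homomorphism h : (Y, ζ, y₀) → (X, ξ, x₀) whose underlying morphism is a monomorphism is an isomorphism. -/
open CategoryTheory CategoryTheory.Limits

universe v u

variable {C : Type u} [Category.{v} C]

variable [HasFiniteCoproducts C] [HasTerminal C]

/-- Naturality of the copairing `[η, ⊥]`. -/
lemma cop_nat (T : C ⥤ C) (η : 𝟭 C ⟶ T)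
    (bot : (Functor.const C).obj (⊤_ C) ⟶ T) {Y Y' : C} (g : Y ⟶ Y') :
    cop T η bot Y ≫ T.map g = coprod.map g (𝟙 (⊤_ C)) ≫ cop T η bot Y' := by
  apply coprod.hom_ext
  · have := η.naturality g
    simp only [cop, coprod.inl_desc_assoc, coprod.map_desc, Category.assoc,
      coprod.inl_desc]
    simpa using this.symm
  · have := bot.naturality g
    simp only [cop, coprod.inr_desc_assoc, coprod.map_desc, Category.assoc,
      coprod.inr_desc, Category.id_comp]
    simpa using this.symm

/-- Every object of a path is in `S`. -/
lemma path_obj_mem {F : C ⥤ C} {I : C} (S : Set C)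
    (hiso : ∀ {X Y : C}, X ∈ S → (X ≅ Y) → Y ∈ S) (hI : I ∈ S)
    (ax1 : AdmitsPreciseFact (Fp1 F) S) {n : ℕ} (Pp : FPath1 F I n) :
    ∀ k, k ≤ n → Pp.P k ∈ S := by
  intro k
  induction k with
  | zero =>
    intro _
    exact hiso hI (eqToIso Pp.hP0).symm
  | succ k ih =>
    intro hk1
    have hkn : k < n := hk1
    have hmem : Pp.P k ∈ S := ih hkn.le
    obtain ⟨Q, m, q, hQ, hq, hfac⟩ := ax1 (Pp.p k hkn) hmem
    obtain ⟨d, hd1, hd2⟩ := Pp.precise k hkn q (𝟙 _) m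
      (by rw [hfac, CategoryTheory.Functor.map_id, Category.comp_id])
    obtain ⟨e, he1, he2⟩ := hq (Pp.p k hkn) (𝟙 Q) d
      (by rw [hd1, CategoryTheory.Functor.map_id, Category.comp_id])
    have hem : e = m := by
      have : e ≫ d ≫ m = m := by rw [← Category.assoc, he2, Category.id_comp]
      rw [hd2, Category.comp_id] at this
      exact this
    have : IsIso d := ⟨m, hd2, by rw [← hem]; exact he2⟩
    exact hiso hQ (asIso d).symm

section Theorems

variable [HasPullbacks C]

theorem pathReachable_no_proper_subcoalgebra [Balanced C]
    (T F : C ⥤ C) (I : C) (S : Set C)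
    (hiso : ∀ {X Y : C}, X ∈ S → (X ≅ Y) → Y ∈ S) (hI : I ∈ S)
    (η : 𝟭 C ⟶ T) (bot : (Functor.const C).obj (⊤_ C) ⟶ T)
    (ord : HomOrder T)
    (ax1 : AdmitsPreciseFact (Fp1 F) S)
    (ax2 : ∀ (ι : Type v) {Y Z : C} (Xf : ι → C) (e : ∀ i, Xf i ⟶ Y),
      (∀ {W : C} (u v : Y ⟶ W), (∀ i, e i ≫ u = e i ≫ v) → u = v) →
      ∀ (f g : Y ⟶ T.obj Z), (∀ i, ord.le (e i ≫ f) (e i ≫ g)) → ord.le f g)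
    (ax3 : ∀ {X Y : C} (f : X ⟶ T.obj Y), ord.le (terminal.from X ≫ bot.app Y) f)
    (ax4 : ∀ {X Y : C} (f : X ⟶ T.obj Y), X ∈ S →
      IsLUBhom ord {g | ∃ f' : X ⟶ Y ⨿ ⊤_ C, g = f' ≫ cop T η bot Y ∧ ord.le g f} f)
    (ax5 : ∀ {A X Y : C}, A ∈ S → ∀ (x : A ⟶ T.obj X) (y : A ⟶ Y ⨿ ⊤_ C) (h : X ⟶ Y),
      ord.le (y ≫ cop T η bot Y) (x ≫ T.map h) →
      ∃ x' : A ⟶ X ⨿ ⊤_ C, ord.le (x' ≫ cop T η bot X) x ∧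
        x' ≫ coprod.map h (𝟙 (⊤_ C)) = y)
    (A : Coalg T F I) (hreach : PathReachable η bot ord A) :
    ∀ (B : Coalg T F I) (h : B.X ⟶ A.X), Mono h →
      B.pt ≫ h = A.pt → B.str ≫ T.map (F.map h) = h ≫ A.str →
      IsIso h := by
  intro B h hmono hpt hstr
  haveI : Mono h := hmono
  haveI : Epi h := by
    constructor
    intro W u v huv
    apply hreach
    intro n Pp r₀ hrun₀
    have hmem := path_obj_mem S hiso hI ax1 Pp
    obtain ⟨r, rfl⟩ : ∃ r : (∐ fun j : Fin (n + 1) => Pp.P j) ⟶ A.X, r = r₀ := ⟨r₀, rfl⟩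
    obtain ⟨hpt_run, hlax_run⟩ := hrun₀
    simp only [Jobj] at hpt_run hlax_run
    -- each component of the run factors through h
    have key : ∀ (k : ℕ) (hk : k ≤ n), ∃ r' : Pp.P k ⟶ B.X,
        r' ≫ h = Sigma.ι (fun j : Fin (n + 1) => Pp.P j) ⟨k, Nat.lt_succ_of_le hk⟩ ≫ r := by
      intro k
      induction k with
      | zero =>
        intro _
        refine ⟨eqToHom Pp.hP0 ≫ B.pt, ?_⟩
        simp only [Category.assoc] at hpt_run
        rw [Category.assoc, hpt, ← hpt_run]
        simp
      | succ k ih =>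
        intro hk1
        have hkn : k < n := hk1
        obtain ⟨r', hr'⟩ := ih hkn.le
        -- the lax condition, precomposed with the k-th injection
        have hlax := ord.le_comp (Sigma.ι (fun j : Fin (n + 1) => Pp.P j)
          ⟨k, Nat.lt_succ_of_le hkn.le⟩) (𝟙 (F.obj A.X)) hlax_run
        simp only [Fin.val_mk, CategoryTheory.Functor.map_id, Category.comp_id, Sigma.ι_desc, colimit.ι_desc_assoc,
          colimit.ι_desc, Cofan.mk_ι_app, Category.assoc] at hlax
        rw [dif_pos (show ((⟨k, Nat.lt_succ_of_le hkn.le⟩ : Fin (n + 1)) : ℕ) < n from hkn), Category.assoc] at hlax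
        set s : Pp.P (k + 1) ⟶ A.X :=
          Sigma.ι (fun j : Fin (n + 1) => Pp.P j) ⟨k + 1, Nat.lt_succ_of_le hk1⟩ ≫ r with hs
        have hL : Pp.p k hkn ≫
            (coprod.map (F.map (Sigma.ι (fun j : Fin (n + 1) => Pp.P j)
              ⟨k + 1, Nat.lt_succ_of_le hk1⟩)) (𝟙 (⊤_ C)) ≫
            cop T η bot (F.obj (∐ fun j : Fin (n + 1) => Pp.P j))) ≫ T.map (F.map r) =
            (Pp.p k hkn ≫ coprod.map (F.map s) (𝟙 (⊤_ C))) ≫ cop T η bot (F.obj A.X) := by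
          erw [Category.assoc, cop_nat, coprod.map_map_assoc, ← F.map_comp,
            Category.id_comp, ← hs, Category.assoc]
          rfl
        have hR : Sigma.ι (fun j : Fin (n + 1) => Pp.P j) ⟨k, Nat.lt_succ_of_le hkn.le⟩ ≫
            r ≫ A.str = (r' ≫ B.str) ≫ T.map (F.map h) := by
          rw [← Category.assoc, ← hr', Category.assoc, ← hstr, Category.assoc]
        rw [hL, hR] at hlax
        obtain ⟨x', _, hx'⟩ := ax5 (hmem k hkn.le) (r' ≫ B.str)
          (Pp.p k hkn ≫ coprod.map (F.map s) (𝟙 _)) (F.map h) hlax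
        obtain ⟨d, _, hd⟩ := Pp.precise k hkn (A := B.X) (D := A.X) x' s h
          (by simpa [Fp1] using hx')
        exact ⟨d, hd⟩
    -- conclude r ≫ u = r ≫ v componentwise
    apply Sigma.hom_ext
    intro j
    obtain ⟨r', hr'⟩ := key j (Nat.lt_succ_iff.mp j.isLt)
    have hj : Sigma.ι (fun i : Fin (n + 1) => Pp.P i) j = Sigma.ι (fun i : Fin (n + 1) => Pp.P i)
        ⟨(j : ℕ), Nat.lt_succ_of_le (Nat.lt_succ_iff.mp j.isLt)⟩ := rfl
    erw [← Category.assoc, ← Category.assoc, hj, ← hr', Category.assoc, Category.assoc, huv]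
  exact isIso_of_mono_of_epi h

end Theorems
end

section
/- The composite of precise morphisms is precise: if f : S → F R is F-precise and f' : R → F' Q is F'-precise, then F(f') ∘ f : S → F(F' Q) is (F ∘ F')-precise, where F ∘ F' denotes the composite functor X ↦ F(F' X). -/
open CategoryTheory CategoryTheory.Limits

universe v u

variable {C : Type u} [Category.{v} C]

/-- The composite of precise morphisms is precise for the composite functor
`X ↦ F (F' X)` (which is `F' ⋙ F` in Mathlib's notation). -/
theorem precise_comp (F F' : C ⥤ C) {S R Q : C}
    (f : S ⟶ F.obj R) (f' : R ⟶ F'.obj Q)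
    (hf : Precise F f) (hf' : Precise F' f') :
    Precise (F' ⋙ F) (show S ⟶ (F' ⋙ F).obj Q from f ≫ F.map f') := by
  intro A D u g h hcomm
  -- first lift the square along `f` against `F'.map h`, then the resulting square along `f'`
  obtain ⟨e, hfe, heh⟩ := hf u (f' ≫ F'.map g) (F'.map h) (by simpa using hcomm)
  obtain ⟨d, hf'd, hdh⟩ := hf' e g h heh
  exact ⟨d, by simp [← hfe, ← hf'd], hdh⟩
end

section
/- If F : C → C and F' : C → C both admit precise factorizations w.r.t. a class S of objects, then the composite functor F ∘ F' (X ↦ F(F' X)) admits precise factorizations w.r.t. S. -/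
open CategoryTheory CategoryTheory.Limits

universe v u

variable {C : Type u} [Category.{v} C]

/-- The diagonal is built in two stages: precision of `s` gives `d₁ : R ⟶ F'.obj A` with
`d₁ ≫ F'.map h = t ≫ F'.map g`, and precision of `t` lifts `d₁` to the diagonal `d`. -/
theorem Precise.comp_map {F F' : C ⥤ C} {S R R' : C} {s : S ⟶ F.obj R} {t : R ⟶ F'.obj R'}
    (hs : Precise F s) (ht : Precise F' t) : Precise (F' ⋙ F) (s ≫ F.map t) := by
  intro A D g₀ g h hcomm
  obtain ⟨d₁, hsd₁, hd₁h⟩ := hs g₀ (t ≫ F'.map g) (F'.map h) (by simpa using hcomm)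
  obtain ⟨d, htd, hdh⟩ := ht d₁ g h hd₁h
  refine ⟨d, ?_, hdh⟩
  simp [← hsd₁, ← htd]

theorem admitsPreciseFact_comp_general (F F' : C ⥤ C) (S : Set C)
    (hF : AdmitsPreciseFact F S) (hF' : AdmitsPreciseFact F' S) :
    AdmitsPreciseFact (F' ⋙ F) S := by
  intro X Y f hX
  obtain ⟨Z, h, s, hZ, hs, hsh⟩ := hF f hX
  obtain ⟨Y', h', t, hY', ht, hth'⟩ := hF' h hZ
  refine ⟨Y', h', s ≫ F.map t, hY', hs.comp_map ht, ?_⟩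
  simp [← hsh, ← hth']

/-- If `F` and `F'` admit precise factorizations w.r.t. `S`, then so does the
composite functor `X ↦ F (F' X)` (which is `F' ⋙ F` in Mathlib's notation). -/
theorem admitsPreciseFact_comp (F F' : C ⥤ C) (S : Set C)
    (hiso : ∀ {X Y : C}, X ∈ S → (X ≅ Y) → Y ∈ S)
    (hF : AdmitsPreciseFact F S) (hF' : AdmitsPreciseFact F' S) :
    AdmitsPreciseFact (F' ⋙ F) S :=
  admitsPreciseFact_comp_general F F' S hF hF'
end

section
/- Pairing of precise morphisms: let (F_i : C → C)_{i ∈ ι} be a family of functors, and for each i let f_i : X → F_i Y_i be F_i-precise. Then the morphism ⟨F_i(in_i) ∘ f_i⟩_{i ∈ ι} : X → ∏_{i ∈ ι} F_i(∐_{j ∈ ι} Y_j), whose i-th component is F_i(in_i) ∘ f_i where in_i : Y_i → ∐_{j ∈ ι} Y_j is the coproduct injection, is precise for the pointwise product functor ∏_{i ∈ ι} F_i. -/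
open CategoryTheory CategoryTheory.Limits

universe w v u

variable {C : Type u} [Category.{v} C]

/-- The pointwise product of a family of endofunctors. -/
noncomputable def prodF {ι : Type w} [HasProductsOfShape ι C] (Fi : ι → C ⥤ C) : C ⥤ C where
  obj X := ∏ᶜ fun i => (Fi i).obj X
  map f := Limits.Pi.map fun i => (Fi i).map f
  map_id := by intro X; simp [Limits.Pi.map_id]
  map_comp := by intro X Y Z f g; simp [Limits.Pi.map_comp_map]

/-- Pairing of precise morphisms: given `F_i`-precise morphisms
`f_i : X ⟶ F_i Y_i`, the morphism `⟨F_i(in_i) ∘ f_i⟩ : X ⟶ ∏_i F_i (∐_j Y_j)`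
is precise for the pointwise product functor `∏_i F_i`. -/
theorem precise_pi {ι : Type w} [HasProductsOfShape ι C] [HasCoproductsOfShape ι C]
    (Fi : ι → C ⥤ C) {X : C} (Y : ι → C)
    (f : ∀ i, X ⟶ (Fi i).obj (Y i)) (hf : ∀ i, Precise (Fi i) (f i)) :
    Precise (prodF Fi)
      (show X ⟶ (prodF Fi).obj (∐ Y) from
        Limits.Pi.lift fun i => f i ≫ (Fi i).map (Sigma.ι Y i)) := by
  intro A D f' g h hcomm
  have hcomp : ∀ i, (f' ≫ Pi.π _ i) ≫ (Fi i).map h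
      = f i ≫ (Fi i).map (Sigma.ι Y i ≫ g) := by
    intro i
    have := congrArg (fun t => t ≫ Pi.π (fun i => (Fi i).obj D) i) hcomm
    have h2 := this
    simp only [prodF] at h2
    erw [Category.assoc, Pi.map_π, Category.assoc, Pi.map_π, Pi.lift_π_assoc] at h2
    erw [Category.assoc]
    rw [Functor.map_comp, ← Category.assoc (f i)]
    exact h2
  choose d hd1 hd2 using fun i => hf i (f' ≫ Pi.π _ i) (Sigma.ι Y i ≫ g) h (hcomp i)
  refine ⟨Sigma.desc d, ?_, ?_⟩
  · refine Limits.Pi.hom_ext _ _ fun i => ?_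
    simpa [prodF, ← Functor.map_comp] using hd1 i
  · ext i
    simpa using hd2 i
end

section
/- If each functor in a family (F_i : C → C)_{i ∈ ι} admits precise factorizations w.r.t. a class S of objects, and S is closed under ι-indexed coproducts, then the pointwise product functor ∏_{i ∈ ι} F_i (sending X to ∏_{i∈ι} F_i X) admits precise factorizations w.r.t. S. -/
open CategoryTheory CategoryTheory.Limits

universe w v u

variable {C : Type u} [Category.{v} C]

/-- If every `F_i` admits precise factorizations w.r.t. `S` and `S` is closed
under `ι`-indexed coproducts, then the pointwise product `∏_i F_i` admits
precise factorizations w.r.t. `S`. -/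
theorem admitsPreciseFact_prod {ι : Type w}
    [HasProductsOfShape ι C] [HasCoproductsOfShape ι C]
    (Fi : ι → C ⥤ C) (S : Set C)
    (hiso : ∀ {X Y : C}, X ∈ S → (X ≅ Y) → Y ∈ S)
    (hFi : ∀ i, AdmitsPreciseFact (Fi i) S)
    (hS : ∀ (Y : ι → C), (∀ i, Y i ∈ S) → (∐ Y) ∈ S) :
    AdmitsPreciseFact (prodF Fi) S := by
  intro X Y f hX
  choose Y' h' f' hY' hprec hfac using fun i => hFi i (f ≫ Pi.π _ i) hX
  refine ⟨∐ Y', Sigma.desc h', Pi.lift (fun i => f' i ≫ (Fi i).map (Sigma.ι Y' i)),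
    hS Y' hY', ?_, ?_⟩
  · intro A D k g h hcomm
    have hcomm_i : ∀ i, (k ≫ Pi.π _ i) ≫ (Fi i).map h
        = f' i ≫ (Fi i).map (Sigma.ι Y' i ≫ g) := by
      intro i
      have := congrArg (fun t => t ≫ Pi.π (fun j => (Fi j).obj D) i) hcomm
      have e : ∀ {U V : C} (m : U ⟶ V), (prodF Fi).map m ≫ Pi.π (fun j => (Fi j).obj V) i
          = Pi.π (fun j => (Fi j).obj U) i ≫ (Fi i).map m := fun m => Limits.Pi.map_π (fun j => (Fi j).map m) i
      have e2 : Pi.lift (fun i => f' i ≫ (Fi i).map (Sigma.ι Y' i)) ≫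
          Pi.π (fun j => (Fi j).obj (∐ Y')) i = f' i ≫ (Fi i).map (Sigma.ι Y' i) := Pi.lift_π _ _
      calc (k ≫ Pi.π _ i) ≫ (Fi i).map h = k ≫ ((prodF Fi).map h ≫ Pi.π _ i) :=
            (Category.assoc _ _ _).trans
              (congrArg (fun t : (prodF Fi).obj A ⟶ (Fi i).obj D => k ≫ t) (e h).symm)
        _ = (k ≫ (prodF Fi).map h) ≫ Pi.π _ i := (Category.assoc _ _ _).symm
        _ = (Pi.lift (fun i => f' i ≫ (Fi i).map (Sigma.ι Y' i)) ≫ (prodF Fi).map g) ≫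
            Pi.π _ i := this
        _ = _ := (Category.assoc _ _ _).trans
            ((congrArg (fun t : (prodF Fi).obj (∐ Y') ⟶ (Fi i).obj D =>
                Pi.lift (fun i => f' i ≫ (Fi i).map (Sigma.ι Y' i)) ≫ t) (e g)).trans
            ((Category.assoc _ _ _).symm.trans
            ((congrArg (fun t : X ⟶ (Fi i).obj (∐ Y') => t ≫ (Fi i).map g) e2).trans
            ((Category.assoc _ _ _).trans
              (congrArg (fun t => f' i ≫ t) ((Fi i).map_comp _ _).symm)))))
    choose d hd1 hd2 using fun i => hprec i (k ≫ Pi.π _ i) (Sigma.ι Y' i ≫ g) h (hcomm_i i)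
    refine ⟨Sigma.desc d, ?_, ?_⟩
    · apply limit.hom_ext
      rintro ⟨i⟩
      simp only [prodF, Pi.lift, Limits.Pi.map, Category.assoc, limMap_π, Discrete.natTrans_app,
        limit.lift_π_assoc, Fan.mk_pt, Fan.mk_π_app, ← Functor.map_comp,
        colimit.ι_desc, Cofan.mk_pt, Cofan.mk_ι_app]
      exact hd1 i
    · ext i
      simpa using hd2 i
  · apply limit.hom_ext
    rintro ⟨i⟩
    simp only [prodF, Pi.lift, Limits.Pi.map, Category.assoc, limMap_π, Discrete.natTrans_app,
      limit.lift_π_assoc, Fan.mk_pt, Fan.mk_π_app, ← Functor.map_comp,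
      colimit.ι_desc, Cofan.mk_pt, Cofan.mk_ι_app]
    exact hfac i
end

section
/- Coproduct of precise morphisms: let C be a finitary extensive category, F₁, F₂ : C → C functors, and let f₁ : A₁ → F₁ X₁ be F₁-precise and f₂ : A₂ → F₂ X₂ be F₂-precise. Then the morphism A₁ + A₂ → F₁(X₁ + X₂) + F₂(X₁ + X₂) given on the first summand by in₁ ∘ F₁(in₁) ∘ f₁ and on the second by in₂ ∘ F₂(in₂) ∘ f₂ is precise for the pointwise coproduct functor F₁ + F₂ (sending X to F₁X + F₂X). -/
open CategoryTheory CategoryTheory.Limits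

universe v u

variable {C : Type u} [Category.{v} C]

/-- The pointwise (binary) coproduct of two endofunctors, `X ↦ F₁ X + F₂ X`. -/
noncomputable def sumF [HasBinaryCoproducts C] (F₁ F₂ : C ⥤ C) : C ⥤ C where
  obj X := F₁.obj X ⨿ F₂.obj X
  map f := coprod.map (F₁.map f) (F₂.map f)

/-- In a finitary extensive category, the square formed by `coprod.map f g`
and the left injections is a pullback. -/
lemma isPullback_coprodMap_inl [FinitaryExtensive C] {X Y X' Y' : C}
    (f : X ⟶ X') (g : Y ⟶ Y') :
    IsPullback coprod.inl f (coprod.map f g) (coprod.inl : X' ⟶ X' ⨿ Y') := by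
  have := (((BinaryCofan.isVanKampen_iff _).mp
    (FinitaryExtensive.vanKampen _ (coprodIsCoprod X' Y'))
    (BinaryCofan.mk (coprod.inl : X ⟶ X ⨿ Y) coprod.inr) f g
    (coprod.map f g) (by exact (coprod.inl_map f g).symm) (by exact (coprod.inr_map f g).symm)).mp ⟨coprodIsCoprod X Y⟩).1
  exact this

/-- Right version. -/
lemma isPullback_coprodMap_inr [FinitaryExtensive C] {X Y X' Y' : C}
    (f : X ⟶ X') (g : Y ⟶ Y') :
    IsPullback coprod.inr g (coprod.map f g) (coprod.inr : Y' ⟶ X' ⨿ Y') := by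
  have := (((BinaryCofan.isVanKampen_iff _).mp
    (FinitaryExtensive.vanKampen _ (coprodIsCoprod X' Y'))
    (BinaryCofan.mk (coprod.inl : X ⟶ X ⨿ Y) coprod.inr) f g
    (coprod.map f g) (by exact (coprod.inl_map f g).symm) (by exact (coprod.inr_map f g).symm)).mp ⟨coprodIsCoprod X Y⟩).2
  exact this

/-- Coproduct of precise morphisms: in a finitary extensive category, given an
`F₁`-precise `f₁ : A₁ ⟶ F₁ X₁` and an `F₂`-precise `f₂ : A₂ ⟶ F₂ X₂`, the induced
morphism `A₁ + A₂ ⟶ F₁(X₁+X₂) + F₂(X₁+X₂)` (given on the summands by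
`in₁ ∘ F₁(in₁) ∘ f₁` and `in₂ ∘ F₂(in₂) ∘ f₂`) is `(F₁ + F₂)`-precise. -/
theorem precise_coprod [FinitaryExtensive C] (F₁ F₂ : C ⥤ C)
    {A₁ A₂ X₁ X₂ : C} (f₁ : A₁ ⟶ F₁.obj X₁) (f₂ : A₂ ⟶ F₂.obj X₂)
    (h₁ : Precise F₁ f₁) (h₂ : Precise F₂ f₂) :
    Precise (sumF F₁ F₂)
      (show A₁ ⨿ A₂ ⟶ (sumF F₁ F₂).obj (X₁ ⨿ X₂) from
        coprod.desc (f₁ ≫ F₁.map coprod.inl ≫ coprod.inl)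
          (f₂ ≫ F₂.map coprod.inr ≫ coprod.inr)) := by
  intro A D f g h hcomm
  -- restrict the equation to each summand of A₁ ⨿ A₂
  have hcomm₁ : (coprod.inl ≫ f) ≫ coprod.map (F₁.map h) (F₂.map h)
      = (f₁ ≫ F₁.map (coprod.inl ≫ g)) ≫ coprod.inl := by
    have := congrArg (fun t => (coprod.inl : A₁ ⟶ A₁ ⨿ A₂) ≫ t) hcomm
    exact (Category.assoc _ _ _).trans (by simpa [sumF, Category.assoc, coprod.inl_desc, coprod.inr_desc] using this)
  have hcomm₂ : (coprod.inr ≫ f) ≫ coprod.map (F₁.map h) (F₂.map h)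
      = (f₂ ≫ F₂.map (coprod.inr ≫ g)) ≫ coprod.inr := by
    have := congrArg (fun t => (coprod.inr : A₂ ⟶ A₁ ⨿ A₂) ≫ t) hcomm
    exact (Category.assoc _ _ _).trans (by simpa [sumF, Category.assoc, coprod.inl_desc, coprod.inr_desc] using this)
  -- use extensivity: each restricted map factors through the corresponding summand
  have hP₁ := isPullback_coprodMap_inl (F₁.map h) (F₂.map h)
  have hP₂ := isPullback_coprodMap_inr (F₁.map h) (F₂.map h)
  set x₁ := hP₁.lift (coprod.inl ≫ f) (f₁ ≫ F₁.map (coprod.inl ≫ g)) hcomm₁ with hx₁def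
  have hx₁l := hP₁.lift_fst (coprod.inl ≫ f) (f₁ ≫ F₁.map (coprod.inl ≫ g)) hcomm₁
  have hx₁r := hP₁.lift_snd (coprod.inl ≫ f) (f₁ ≫ F₁.map (coprod.inl ≫ g)) hcomm₁
  set x₂ := hP₂.lift (coprod.inr ≫ f) (f₂ ≫ F₂.map (coprod.inr ≫ g)) hcomm₂ with hx₂def
  have hx₂l := hP₂.lift_fst (coprod.inr ≫ f) (f₂ ≫ F₂.map (coprod.inr ≫ g)) hcomm₂
  have hx₂r := hP₂.lift_snd (coprod.inr ≫ f) (f₂ ≫ F₂.map (coprod.inr ≫ g)) hcomm₂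
  -- apply preciseness of f₁ and f₂
  obtain ⟨d₁, hd₁, hd₁'⟩ := h₁ x₁ (coprod.inl ≫ g) h
    (by rw [hx₁r, F₁.map_comp])
  obtain ⟨d₂, hd₂, hd₂'⟩ := h₂ x₂ (coprod.inr ≫ g) h
    (by rw [hx₂r, F₂.map_comp])
  refine ⟨coprod.desc d₁ d₂, ?_, by ext <;> simpa [coprod.inl_desc, coprod.inr_desc]⟩
  ext
  · simp only [sumF, coprod.inl_desc_assoc, Category.assoc, coprod.inl_map,
      ← F₁.map_comp_assoc, coprod.inl_desc, hd₁]
    rw [← hx₁l, ← Category.assoc, hd₁]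
  · simp only [sumF, coprod.inr_desc_assoc, Category.assoc, coprod.inr_map,
      ← F₂.map_comp_assoc, coprod.inr_desc, hd₂]
    rw [← hx₂l, ← Category.assoc, hd₂]
end

section
/- For the powerset functor P on the category of types (P X = Set X, with P acting on functions by taking images), if f : X → Set Y is P-precise, then f x = ∅ for every x : X. -/
universe u

/-- A function `s : S → Set R` is precise for the powerset functor
(`P X = Set X`, acting on functions by taking images) if whenever
`Set.image h ∘ f = Set.image g ∘ s` there is `d : R → C` with
`Set.image d ∘ s = f` and `h ∘ d = g`. -/
def PowersetPrecise {S R : Type u} (s : S → Set R) : Prop :=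
  ∀ {C D : Type u} (f : S → Set C) (g : R → D) (h : C → D),
    Set.image h ∘ f = Set.image g ∘ s →
    ∃ d : R → C, Set.image d ∘ s = f ∧ h ∘ d = g

/-!
Precision against the terminal map `Set C → Set PUnit`, which only records whether a set is
empty, says that any family of sets `t x` that is nonempty exactly where `f x` is can be written
as `d '' f x` for one `d : Y → C`. Taking `C = Set Y` and `t x = univ` wherever `f x` is nonempty,
a single nonempty `f x` would make `d : Y → Set Y` surjective, against Cantor's theorem.
-/

theorem Set.image_const_punit_eq_iff {α β : Type*} (s : Set α) (t : Set β) :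
    (fun _ => PUnit.unit) '' s = (fun _ => PUnit.unit) '' t ↔ (s.Nonempty ↔ t.Nonempty) := by
  constructor
  · intro h
    rw [← Set.image_nonempty (f := fun _ => PUnit.unit), h, Set.image_nonempty]
  · intro h
    ext ⟨⟩
    simp only [Set.mem_image, and_true]
    exact h

theorem PowersetPrecise.exists_image_comp_eq {S R : Type u} {s : S → Set R}
    (hs : PowersetPrecise s) {C : Type u} (t : S → Set C)
    (ht : ∀ x, (t x).Nonempty ↔ (s x).Nonempty) :
    ∃ d : R → C, Set.image d ∘ s = t := by
  have hcomm : Set.image (fun _ => PUnit.unit.{u + 1}) ∘ t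
      = Set.image (fun _ => PUnit.unit.{u + 1}) ∘ s :=
    funext fun x => (Set.image_const_punit_eq_iff _ _).mpr (ht x)
  obtain ⟨d, hd, -⟩ := hs t _ _ hcomm
  exact ⟨d, hd⟩

/-- If `f : X → Set Y` is precise for the powerset functor, then `f x = ∅` for
every `x`. -/
theorem powersetPrecise_empty {X Y : Type u} (f : X → Set Y)
    (hf : PowersetPrecise f) : ∀ x : X, f x = ∅ := by
  intro x₀
  by_contra hne
  obtain ⟨d, hd⟩ := hf.exists_image_comp_eq (C := Set Y) (fun x => {_A | (f x).Nonempty})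
    fun x => ⟨fun ⟨_, h⟩ => h, fun h => ⟨∅, h⟩⟩
  have himg : d '' f x₀ = Set.univ :=
    (congrFun hd x₀).trans (Set.eq_univ_of_forall fun _ => Set.nonempty_iff_ne_empty.mpr hne)
  refine Function.cantor_surjective d fun A => ?_
  obtain ⟨y, -, hy⟩ := himg.symm ▸ Set.mem_univ A
  exact ⟨y, hy⟩
end

section
/- For the finite bag (multiset) functor B on the category of types (B X = Multiset X, with B acting on functions by Multiset.map), a function s : X → Multiset Y is B-precise if and only if for every y : Y there is exactly one x : X with y ∈ s x, and for this x the multiplicity of y in s x equals 1 (equivalently, the total count of y across all s x is exactly 1). -/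
/-!
Precision of `s` is tested with `g = id` and two choices of `h` and `f`. For the projection
`h : Σ x, {y // y ∈ s x} → Y`, the lift `fun x => (s x).attach.map (Sigma.mk x)` forces the
factorisation `d` to pick, for each `y`, the unique `x` with `y ∈ s x`. Through
`Option Y → Y`, `o ↦ o.getD y₀`, tagging one occurrence of `y₀` in `s x₀` by `none` and the
others by `some` makes `d y₀` equal to both tags unless `y₀` occurs at most once.

Conversely, if the `s x` are duplicate-free and partition `Y`, the equation
`map h (f x) = map g (s x)` yields a matching of `f x` with `s x` along `h c = g y`; as `s x` is
duplicate-free, the matching is a map `s x → C`, and these maps glue to `d`.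
-/

universe u

/-- A function `s : S → Multiset R` is precise for the bag functor
(`B X = Multiset X`, acting on functions by `Multiset.map`) if whenever
`Multiset.map h ∘ f = Multiset.map g ∘ s` there is `d : R → C` with
`Multiset.map d ∘ s = f` and `h ∘ d = g`. -/
def BagPrecise {S R : Type u} (s : S → Multiset R) : Prop :=
  ∀ {C D : Type u} (f : S → Multiset C) (g : R → D) (h : C → D),
    (fun x => (f x).map h) = (fun x => (s x).map g) →
    ∃ d : R → C, (fun x => (s x).map d) = f ∧ h ∘ d = g

theorem Multiset.Rel.exists_eq_map_of_nodup {α β : Type*} [Nonempty α] {r : α → β → Prop}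
    {m : Multiset α} {n : Multiset β} (h : Multiset.Rel r m n) (hn : n.Nodup) :
    ∃ d : β → α, m = n.map d ∧ ∀ b ∈ n, r (d b) b := by
  classical
  induction h with
  | zero => exact ⟨fun _ => Classical.arbitrary α, by simp, by simp⟩
  | @cons a b m n hab _ ih =>
    obtain ⟨hb, hn⟩ := Multiset.nodup_cons.1 hn
    obtain ⟨d, rfl, hd⟩ := ih hn
    refine ⟨Function.update d b a, ?_, ?_⟩
    · rw [Multiset.map_cons, Function.update_self,
        Multiset.map_congr rfl fun c hc => Function.update_of_ne (ne_of_mem_of_not_mem hc hb) _ _]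
    · simp only [Multiset.mem_cons, forall_eq_or_imp, Function.update_self]
      refine ⟨hab, fun c hc => ?_⟩
      rw [Function.update_of_ne (ne_of_mem_of_not_mem hc hb)]
      exact hd c hc

variable {X Y : Type u} {s : X → Multiset Y}

theorem BagPrecise.existsUnique_mem (hs : BagPrecise s) (y : Y) : ∃! x, y ∈ s x := by
  obtain ⟨d, hd, hdg⟩ := hs (C := Σ x, {y // y ∈ s x}) (fun x => (s x).attach.map (Sigma.mk x))
    id (fun p => p.2.1) (by funext x; simp [Multiset.map_map])
  have hval : ∀ y, (d y).2.1 = y := congrFun hdg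
  refine ⟨(d y).1, by simpa only [hval] using (d y).2.2, fun x hx => ?_⟩
  obtain ⟨z, -, hz⟩ := Multiset.mem_map.1 (congrFun hd x ▸ Multiset.mem_map_of_mem d hx)
  rw [← hz]

theorem BagPrecise.nodup (hs : BagPrecise s) (x₀ : X) : (s x₀).Nodup := by
  classical
  refine Multiset.nodup_iff_count_le_one.2 fun y₀ => ?_
  by_contra! hy
  have hmem : y₀ ∈ (s x₀).erase y₀ :=
    Multiset.count_pos.1 (by rw [Multiset.count_erase_self]; omega)
  obtain ⟨d, hd, hdg⟩ := hs (C := Option Y) (g := id) (h := fun o => o.getD y₀)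
    (Function.update (fun x => (s x).map some) x₀ (none ::ₘ ((s x₀).erase y₀).map some))
    (by
      funext x
      rcases eq_or_ne x x₀ with rfl | hx
      · simp [Multiset.map_map, Multiset.cons_erase (Multiset.mem_of_mem_erase hmem)]
      · simp [hx, Multiset.map_map])
  have hdx₀ : (s x₀).map d = none ::ₘ ((s x₀).erase y₀).map some := by
    simpa using congrFun hd x₀
  have key : ∀ c ∈ none ::ₘ ((s x₀).erase y₀).map some, c.getD y₀ = y₀ → c = d y₀ := by
    intro c hc hcy
    rw [← hdx₀] at hc
    obtain ⟨z, -, rfl⟩ := Multiset.mem_map.1 hc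
    rw [← show (d z).getD y₀ = z from congrFun hdg z, hcy]
  exact Option.some_ne_none y₀ <|
    (key _ (Multiset.mem_cons_of_mem (Multiset.mem_map_of_mem some hmem)) rfl).trans
      (key none (Multiset.mem_cons_self _ _) rfl).symm

theorem bagPrecise_of_nodup_of_existsUnique (hnd : ∀ x, (s x).Nodup)
    (hex : ∀ y, ∃! x, y ∈ s x) : BagPrecise s := by
  intro C D f g h hfg
  have hrel (x : X) : Multiset.Rel (fun c y => h c = g y) (f x) (s x) :=
    Multiset.rel_map.1 (Multiset.rel_eq.2 (congrFun hfg x))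
  choose xOf hxOf huniq using hex
  rcases isEmpty_or_nonempty C with hC | hC
  · have : IsEmpty Y := ⟨fun y => by
      obtain ⟨c, -⟩ :=
        Multiset.exists_mem_of_rel_of_mem (Multiset.rel_flip.2 (hrel (xOf y))) (hxOf y)
      exact hC.false c⟩
    exact ⟨isEmptyElim, Subsingleton.elim _ _, funext isEmptyElim⟩
  choose d hd hdr using fun x => (hrel x).exists_eq_map_of_nodup (hnd x)
  refine ⟨fun y => d (xOf y) y, funext fun x => ?_, funext fun y => hdr _ y (hxOf y)⟩
  rw [hd x]
  exact Multiset.map_congr rfl fun y hy => by rw [huniq y x hy]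

theorem bagPrecise_iff_nodup_and_existsUnique :
    BagPrecise s ↔ (∀ x, (s x).Nodup) ∧ ∀ y, ∃! x, y ∈ s x :=
  ⟨fun hs => ⟨hs.nodup, hs.existsUnique_mem⟩,
    fun h => bagPrecise_of_nodup_of_existsUnique h.1 h.2⟩

/-- A function `s : X → Multiset Y` is precise for the bag functor iff for every
`y : Y` there is exactly one `x : X` with `y ∈ s x`, and for every such `x` the
multiplicity of `y` in `s x` equals `1`. -/
theorem bagPrecise_iff {X Y : Type u} [DecidableEq Y] (s : X → Multiset Y) :
    BagPrecise s ↔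
      ∀ y : Y, (∃! x : X, y ∈ s x) ∧ ∀ x : X, y ∈ s x → (s x).count y = 1 := by
  simp only [bagPrecise_iff_nodup_and_existsUnique, Multiset.nodup_iff_count_eq_one]
  exact ⟨fun ⟨hnd, hex⟩ y => ⟨hex y, fun x => hnd x y⟩,
    fun h => ⟨fun x y => (h y).2 x, fun y => (h y).1⟩⟩
end
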